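/- arXiv:gr-qc/0510052 — 2 statements merged into one kernel-verified Lean document; each statement's English description precedes it below -/
import Mathlib

section
/- Let {E_c}_{c∈C} be a finite family of I×I matrices over ℂ, where I = (a × b) ⊕ k, and let U ∈ Matrix b b ℂ be unitary. Then the following are equivalent: (1) there exist scalars λ_{c,x,y} ∈ ℂ with P_{xx} · (Ũ† E_c) · P_{yy} = λ_{c,x,y} • P_{xy} for all c, x, y, together with (Ũ† E_c) · P = P · (Ũ† E_c) · P for all c; (2) the subspace of ℂ^I spanned by the a×b summand is invariant under each operator Ũ† E_c, and for each c there exists X_c ∈ Matrix a a ℂ with P · (Ũ† E_c) · P = emb(X_c, 1^B). -/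
/-!
Split `I × I` matrices into 2 × 2 blocks along `I = (a × b) ⊕ k`. The matrices `P`, `P_{xy}` and
`emb X 1` have only a top-left block, so `M P = P M P` says that the bottom-left block of `M`
vanishes, which is the invariance of the `a × b` summand, and `P M P = emb X 1` concerns only the
top-left block `A` of `M`. Finally `A = X ⊗ 1` holds iff every compression
`(e_{xx} ⊗ 1) A (e_{yy} ⊗ 1)` is a multiple of `e_{xy} ⊗ 1`, the multiple being `X x y`.
-/

open Matrix Kronecker BigOperators

section

variable {a b k : Type*} [Fintype a] [Fintype b] [Fintype k]
  [DecidableEq a] [DecidableEq b] [DecidableEq k]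

/-- The embedding of `σA ⊗ σB` into the `(a × b) ⊕ k`-indexed matrices:
the entry at `((x,i),(y,j))` (both in the `a × b` summand) is
`σA x y * σB i j`, and all other entries vanish. -/
noncomputable def emb (σA : Matrix a a ℂ) (σB : Matrix b b ℂ) :
    Matrix ((a × b) ⊕ k) ((a × b) ⊕ k) ℂ :=
  Matrix.fromBlocks (σA ⊗ₖ σB) 0 0 0

/-- The projection onto the `a × b` summand. -/
noncomputable def Pm : Matrix ((a × b) ⊕ k) ((a × b) ⊕ k) ℂ :=
  Matrix.fromBlocks 1 0 0 0

/-- The matrix units `P_{xy} = emb (e_{xy}, 1^B)`. -/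
noncomputable def Pu (x y : a) : Matrix ((a × b) ⊕ k) ((a × b) ⊕ k) ℂ :=
  emb (Matrix.single x y 1) 1

/-- `Ũ`: the `I × I` unitary acting as `1^A ⊗ U` on the `a × b` summand and
as the identity on the `k` summand. -/
noncomputable def Ut (U : Matrix b b ℂ) :
    Matrix ((a × b) ⊕ k) ((a × b) ⊕ k) ℂ :=
  Matrix.fromBlocks ((1 : Matrix a a ℂ) ⊗ₖ U) 0 0 1

end

namespace Matrix

variable {m n o p R : Type*}

theorem toBlocks₂₁_eq_zero_iff_mulVec_inr_eq_zero [Fintype m] [Fintype n] [DecidableEq m]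
    [DecidableEq n] [Semiring R] (M : Matrix (o ⊕ p) (m ⊕ n) R) :
    M.toBlocks₂₁ = 0 ↔
      ∀ v : m ⊕ n → R, (∀ s, v (Sum.inr s) = 0) → ∀ s, (M *ᵥ v) (Sum.inr s) = 0 := by
  constructor
  · intro h v hv s
    have hM q : M (Sum.inr s) (Sum.inl q) = 0 := congrFun (congrFun h s) q
    simp [mulVec, dotProduct, Fintype.sum_sum_type, hM, hv]
  · intro h
    ext s q
    simpa [toBlocks₂₁] using h (Pi.single (Sum.inl q) 1) (by simp) s

theorem exists_eq_kronecker_one_iff [Fintype m] [Fintype n] [DecidableEq m] [DecidableEq n]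
    [CommSemiring R] (A : Matrix (m × n) (m × n) R) :
    (∃ X : Matrix m m R, A = X ⊗ₖ 1) ↔
      ∃ lam : m → m → R, ∀ x y,
        (single x x 1 ⊗ₖ 1) * A * (single y y 1 ⊗ₖ 1) = lam x y • (single x y 1 ⊗ₖ 1) := by
  constructor
  · rintro ⟨X, rfl⟩
    refine ⟨X, fun x y => ?_⟩
    rw [← mul_kronecker_mul, ← mul_kronecker_mul, single_mul_mul_single, ← smul_kronecker]
    simp
  · rintro ⟨lam, h⟩
    refine ⟨of lam, ?_⟩
    ext ⟨x, i⟩ ⟨y, j⟩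
    have := congrFun (congrFun (h x y) (x, i)) (y, j)
    simpa [mul_apply, Fintype.sum_prod_type, single_apply, one_apply] using this

end Matrix

section

variable {a b k : Type*} [Fintype a] [Fintype b] [Fintype k] [DecidableEq a] [DecidableEq b]

theorem mul_Pm (M : Matrix ((a × b) ⊕ k) ((a × b) ⊕ k) ℂ) :
    M * Pm = fromBlocks M.toBlocks₁₁ 0 M.toBlocks₂₁ 0 := by
  conv_lhs => rw [← fromBlocks_toBlocks M]
  simp [Pm, fromBlocks_multiply]

theorem Pm_mul_mul_Pm (M : Matrix ((a × b) ⊕ k) ((a × b) ⊕ k) ℂ) :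
    Pm * M * Pm = fromBlocks M.toBlocks₁₁ 0 0 0 := by
  conv_lhs => rw [← fromBlocks_toBlocks M]
  simp [Pm, fromBlocks_multiply]

theorem Pu_mul_mul_Pu (M : Matrix ((a × b) ⊕ k) ((a × b) ⊕ k) ℂ) (x y : a) :
    Pu x x * M * Pu y y =
      fromBlocks ((single x x 1 ⊗ₖ 1) * M.toBlocks₁₁ * (single y y 1 ⊗ₖ 1)) 0 0 0 := by
  conv_lhs => rw [← fromBlocks_toBlocks M]
  simp [Pu, emb, fromBlocks_multiply]

theorem mul_Pm_eq_Pm_mul_mul_Pm_iff (M : Matrix ((a × b) ⊕ k) ((a × b) ⊕ k) ℂ) :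
    M * Pm = Pm * M * Pm ↔ M.toBlocks₂₁ = 0 := by
  rw [Pm_mul_mul_Pm, mul_Pm, fromBlocks_inj]
  simp

theorem exists_Pm_mul_mul_Pm_eq_emb_iff (M : Matrix ((a × b) ⊕ k) ((a × b) ⊕ k) ℂ) :
    (∃ X : Matrix a a ℂ, Pm * M * Pm = emb X 1) ↔
      ∃ lam : a → a → ℂ, ∀ x y, Pu x x * M * Pu y y = lam x y • Pu x y := by
  simp only [Pm_mul_mul_Pm, Pu_mul_mul_Pu]
  simp only [emb, Pu, fromBlocks_smul, smul_zero, fromBlocks_inj, and_true]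
  exact exists_eq_kronecker_one_iff _

end

section

variable {a b k : Type*} [Fintype a] [Fintype b] [Fintype k]
  [DecidableEq a] [DecidableEq b] [DecidableEq k]

theorem kraus_conditions_iff_invariant_subspace_and_algebra_general
    {C : Type*}
    (E : C → Matrix ((a × b) ⊕ k) ((a × b) ⊕ k) ℂ)
    (U : Matrix b b ℂ) :
    ((∃ lam : C → a → a → ℂ, ∀ (c : C) (x y : a),
        Pu x x * ((Ut U)ᴴ * E c) * Pu y y = lam c x y • Pu x y) ∧
      (∀ c : C, ((Ut U)ᴴ * E c) * Pm = Pm * ((Ut U)ᴴ * E c) * Pm)) ↔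
    ((∀ (c : C) (v : ((a × b) ⊕ k) → ℂ),
        (∀ s : k, v (Sum.inr s) = 0) →
        ∀ s : k, (((Ut U)ᴴ * E c).mulVec v) (Sum.inr s) = 0) ∧
      (∀ c : C, ∃ X : Matrix a a ℂ,
        Pm * ((Ut U)ᴴ * E c) * Pm = emb X 1)) := by
  rw [and_comm]
  refine and_congr (forall_congr' fun c => ?_) ?_
  · rw [mul_Pm_eq_Pm_mul_mul_Pm_iff, toBlocks₂₁_eq_zero_iff_mulVec_inr_eq_zero]
  · simp only [exists_Pm_mul_mul_Pm_eq_emb_iff]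
    rw [Classical.skolem]

/-- For a family `{E c}` of `I × I` matrices and a unitary `U`
on `b`, the conditions (i) `P_{xx} (Ũᴴ E_c) P_{yy} = λ_{c,x,y} • P_{xy}` and
(ii) `(Ũᴴ E_c) P = P (Ũᴴ E_c) P` hold iff the `a × b`-summand subspace of
`ℂ^I` is invariant under each `Ũᴴ E_c` and each compression `P (Ũᴴ E_c) P`
belongs to the algebra `B(H^A) ⊗ 1^B`, i.e. has the form `emb X_c 1`. -/
theorem kraus_conditions_iff_invariant_subspace_and_algebra
    {C : Type*} [Fintype C] [Nonempty a] [Nonempty b] [Nonempty k]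
    (E : C → Matrix ((a × b) ⊕ k) ((a × b) ⊕ k) ℂ)
    (U : Matrix b b ℂ) (hU : U ∈ Matrix.unitaryGroup b ℂ) :
    ((∃ lam : C → a → a → ℂ, ∀ (c : C) (x y : a),
        Pu x x * ((Ut U)ᴴ * E c) * Pu y y = lam c x y • Pu x y) ∧
      (∀ c : C, ((Ut U)ᴴ * E c) * Pm = Pm * ((Ut U)ᴴ * E c) * Pm)) ↔
    ((∀ (c : C) (v : ((a × b) ⊕ k) → ℂ),
        (∀ s : k, v (Sum.inr s) = 0) →
        ∀ s : k, (((Ut U)ᴴ * E c).mulVec v) (Sum.inr s) = 0) ∧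
      (∀ c : C, ∃ X : Matrix a a ℂ,
        Pm * ((Ut U)ᴴ * E c) * Pm = emb X 1)) :=
  kraus_conditions_iff_invariant_subspace_and_algebra_general E U

end
end

section
/- Let Φ be a quantum channel on I = (a × b) ⊕ k, let U ∈ Matrix b b ℂ be unitary, and suppose B is U-invariant under Φ. Then for every σ^B ∈ Matrix b b ℂ, Tr_A( Φ( (1/|a|) • emb(1^A, σ^B) ) ) = U σ^B U†, where |a| is the cardinality of a. -/
/-!
Trace preservation of `Φ` and `Φ (emb 1 σB) = emb τA (U σB Uᴴ)` force `tr τA = |a|` whenever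
`tr σB ≠ 0`, because conjugation by `U` preserves the trace; then
`Tr_A (Φ (|a|⁻¹ • emb 1 σB)) = |a|⁻¹ • tr τA • U σB Uᴴ = U σB Uᴴ`. Both sides of the claim are
additive in `σB`, and every traceless `σB` is the difference `(σB + 1) - 1` of two matrices of
nonzero trace.
-/

open Matrix Kronecker BigOperators

section

variable {a b k : Type*} [Fintype a] [Fintype b] [Fintype k]
  [DecidableEq a] [DecidableEq b] [DecidableEq k]

/-- The partial trace over the `A` subsystem. -/
noncomputable def trA (M : Matrix ((a × b) ⊕ k) ((a × b) ⊕ k) ℂ) :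
    Matrix b b ℂ :=
  fun i j => ∑ x : a, M (Sum.inl (x, i)) (Sum.inl (x, j))

end

section Kraus

variable {n C R : Type*} [Fintype n] [Fintype C] [CommSemiring R] [StarRing R]

def krausMap (E : C → Matrix n n R) : Matrix n n R →ₗ[R] Matrix n n R where
  toFun ρ := ∑ c, E c * ρ * (E c)ᴴ
  map_add' ρ σ := by simp only [Matrix.mul_add, Matrix.add_mul, Finset.sum_add_distrib]
  map_smul' r ρ := by
    simp only [Matrix.mul_smul, Matrix.smul_mul, Finset.smul_sum, RingHom.id_apply]

theorem krausMap_apply (E : C → Matrix n n R) (ρ : Matrix n n R) :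
    krausMap E ρ = ∑ c, E c * ρ * (E c)ᴴ :=
  rfl

theorem trace_krausMap [DecidableEq n] {E : C → Matrix n n R} (hE : ∑ c, (E c)ᴴ * E c = 1)
    (ρ : Matrix n n R) : (krausMap E ρ).trace = ρ.trace := by
  simp_rw [krausMap_apply, trace_sum, trace_mul_cycle (E _), ← trace_sum, ← Finset.sum_mul, hE,
    Matrix.one_mul]

end Kraus

theorem Matrix.trace_unitary_conj {n : Type*} [Fintype n] [DecidableEq n] {U : Matrix n n ℂ}
    (hU : U ∈ unitaryGroup n ℂ) (σ : Matrix n n ℂ) : (U * σ * Uᴴ).trace = σ.trace := by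
  rw [trace_mul_cycle, ← star_eq_conjTranspose, Unitary.star_mul_self_of_mem hU, Matrix.one_mul]

theorem Matrix.addMonoidHom_ext_of_trace_ne_zero {n R M : Type*} [Fintype n] [DecidableEq n]
    [Nonempty n] [Field R] [CharZero R] [AddCommGroup M] {f g : Matrix n n R →+ M}
    (h : ∀ σ : Matrix n n R, σ.trace ≠ 0 → f σ = g σ) : f = g := by
  have h_one : (1 : Matrix n n R).trace ≠ 0 := by
    rw [trace_one]
    exact_mod_cast Fintype.card_ne_zero
  ext σ
  by_cases hσ : σ.trace = 0
  · have h_add_one : (σ + 1).trace ≠ 0 := by rwa [trace_add, hσ, zero_add]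
    rw [← add_sub_cancel_right σ 1, map_sub, map_sub, h _ h_add_one, h _ h_one]
  · exact h σ hσ

section Embedding

variable {a b k : Type*}

theorem emb_add_right (τ : Matrix a a ℂ) (σ₁ σ₂ : Matrix b b ℂ) :
    emb (k := k) τ (σ₁ + σ₂) = emb τ σ₁ + emb τ σ₂ := by
  simp only [emb, kronecker_add, fromBlocks_add, add_zero]

variable [Fintype a]

theorem trA_add (M N : Matrix ((a × b) ⊕ k) ((a × b) ⊕ k) ℂ) :
    trA (M + N) = trA M + trA N := by
  ext i j
  simp only [trA, Matrix.add_apply, Finset.sum_add_distrib]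

theorem trA_smul (s : ℂ) (M : Matrix ((a × b) ⊕ k) ((a × b) ⊕ k) ℂ) :
    trA (s • M) = s • trA M := by
  ext i j
  simp only [trA, Matrix.smul_apply, smul_eq_mul, Finset.mul_sum]

theorem trA_emb (τ : Matrix a a ℂ) (σ : Matrix b b ℂ) :
    trA (k := k) (emb τ σ) = τ.trace • σ := by
  ext i j
  simp [trA, emb, trace, kroneckerMap_apply, Finset.sum_mul]

theorem trace_emb [Fintype b] [Fintype k] (τ : Matrix a a ℂ) (σ : Matrix b b ℂ) :
    (emb (k := k) τ σ).trace = τ.trace * σ.trace := by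
  rw [← trace_kronecker]
  simp only [emb, trace, diag_apply, Fintype.sum_sum_type, fromBlocks_apply₁₁, fromBlocks_apply₂₂,
    Matrix.zero_apply, Finset.sum_const_zero, add_zero]

theorem trace_eq_card_of_trace_emb_conj_eq [DecidableEq a] [Fintype b] [DecidableEq b]
    [Fintype k] {τ : Matrix a a ℂ} {σ U : Matrix b b ℂ} (hU : U ∈ unitaryGroup b ℂ)
    (hσ : σ.trace ≠ 0)
    (h : (emb (k := k) τ (U * σ * Uᴴ)).trace = (emb (k := k) (1 : Matrix a a ℂ) σ).trace) :
    τ.trace = Fintype.card a := by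
  rw [trace_emb, trace_emb, trace_unitary_conj hU, trace_one] at h
  exact mul_right_cancel₀ hσ h

end Embedding

section

variable {a b k : Type*} [Fintype a] [Fintype b] [Fintype k]
  [DecidableEq a] [DecidableEq b] [DecidableEq k]

theorem traceA_of_U_invariant_general
    {C : Type*} [Fintype C] [Nonempty a] [Nonempty b]
    (Φ : Matrix ((a × b) ⊕ k) ((a × b) ⊕ k) ℂ →
         Matrix ((a × b) ⊕ k) ((a × b) ⊕ k) ℂ)
    (E : C → Matrix ((a × b) ⊕ k) ((a × b) ⊕ k) ℂ)
    (hΦ : ∀ ρ, Φ ρ = ∑ c, E c * ρ * (E c)ᴴ)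
    (hE : ∑ c, (E c)ᴴ * E c = 1)
    (U : Matrix b b ℂ) (hU : U ∈ Matrix.unitaryGroup b ℂ)
    (hinv : ∀ (σA : Matrix a a ℂ) (σB : Matrix b b ℂ),
        ∃ τA : Matrix a a ℂ, Φ (emb σA σB) = emb τA (U * σB * Uᴴ)) :
    ∀ σB : Matrix b b ℂ,
      trA (Φ (((Fintype.card a : ℂ))⁻¹ • emb 1 σB)) = U * σB * Uᴴ := by
  obtain rfl : Φ = krausMap E := funext hΦ
  have hcard : (Fintype.card a : ℂ) ≠ 0 := Nat.cast_ne_zero.mpr Fintype.card_ne_zero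
  let lhs : Matrix b b ℂ →+ Matrix b b ℂ :=
    AddMonoidHom.mk' (fun σB => trA (krausMap E ((Fintype.card a : ℂ)⁻¹ • emb 1 σB)))
      fun σ₁ σ₂ => by simp only [emb_add_right, smul_add, map_add, trA_add]
  let rhs : Matrix b b ℂ →+ Matrix b b ℂ :=
    (AddMonoidHom.mulLeft U).comp (AddMonoidHom.mulRight Uᴴ)
  have h_ext : lhs = rhs := by
    refine Matrix.addMonoidHom_ext_of_trace_ne_zero fun σB hσB => ?_
    obtain ⟨τA, hτA⟩ := hinv 1 σB
    have h_card : τA.trace = Fintype.card a :=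
      trace_eq_card_of_trace_emb_conj_eq hU hσB (by rw [← hτA, trace_krausMap hE])
    change trA (krausMap E _) = U * (σB * Uᴴ)
    rw [map_smul, hτA, trA_smul, trA_emb, h_card, smul_smul, inv_mul_cancel₀ hcard, one_smul,
      Matrix.mul_assoc]
  exact fun σB => (DFunLike.congr_fun h_ext σB).trans (Matrix.mul_assoc U σB Uᴴ).symm

/-- If `B` is `U`-invariant under the quantum channel `Φ`,
then `Tr_A (Φ (ι_B σB)) = U σB Uᴴ` for all `σB`, where
`ι_B σB = (1/|a|) • emb 1 σB`. -/
theorem traceA_of_U_invariant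
    {C : Type*} [Fintype C] [Nonempty a] [Nonempty b] [Nonempty k]
    (Φ : Matrix ((a × b) ⊕ k) ((a × b) ⊕ k) ℂ →
         Matrix ((a × b) ⊕ k) ((a × b) ⊕ k) ℂ)
    (E : C → Matrix ((a × b) ⊕ k) ((a × b) ⊕ k) ℂ)
    (hΦ : ∀ ρ, Φ ρ = ∑ c, E c * ρ * (E c)ᴴ)
    (hE : ∑ c, (E c)ᴴ * E c = 1)
    (U : Matrix b b ℂ) (hU : U ∈ Matrix.unitaryGroup b ℂ)
    (hinv : ∀ (σA : Matrix a a ℂ) (σB : Matrix b b ℂ),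
        ∃ τA : Matrix a a ℂ, Φ (emb σA σB) = emb τA (U * σB * Uᴴ)) :
    ∀ σB : Matrix b b ℂ,
      trA (Φ (((Fintype.card a : ℂ))⁻¹ • emb 1 σB)) = U * σB * Uᴴ :=
  traceA_of_U_invariant_general Φ E hΦ hE U hU hinv

end
end
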